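/- Any solution (U^n)_{n≥0} of the SFTR-1/2 Crank–Nicolson scheme satisfies the discrete compatible energy decay law ℰ^n − ℰ^{n−1} + (τ^α/2)·ϑ_{n−1}·‖V^{n−1/2}‖² ≤ 0 for every integer n ≥ 1; in particular ℰ^n ≤ ℰ^{n−1}. -/

import Mathlib

/-- The SFTR-1/2 weights `ω_m`. -/
noncomputable def sftrW (α : ℝ) : ℕ → ℝ
  | 0 => (2 * α / (α + 1)) ^ α
  | 1 => -α * (2 * α / (α + 1)) ^ (α + 1)
  | (m + 2) =>
      2 * α / (((m : ℝ) + 2) * (α + 1)) *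
        (((((m : ℝ) + 2) - 1) / α - α) * sftrW α (m + 1) +
          (α - 1) / (2 * α) * (((m : ℝ) + 2) - 2) * sftrW α m)

/-- The sequence `θ_m`. -/
noncomputable def seqTheta (α : ℝ) : ℕ → ℝ
  | 0 => ((α + 1) / (2 * α)) ^ α
  | 1 => (α - 1) * (2 * α + 1) / (α + 1) * seqTheta α 0
  | (m + 2) =>
      2 * α / (((m : ℝ) + 2) * (1 + α)) *
        (((((m : ℝ) + 2) - 1) / α - (1 - α) / (2 * α) * (2 * α + 1)) * seqTheta α (m + 1) +
          (1 - α) / (2 * α) * (3 - ((m : ℝ) + 2)) * seqTheta α m)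

/-- The partial sums `ϑ_m = Σ_{s=0}^m θ_s`. -/
noncomputable def varTheta (α : ℝ) (m : ℕ) : ℝ := ∑ s ∈ Finset.range (m + 1), seqTheta α s

open Kronecker in
/-- The periodic second-difference matrix `D`. -/
noncomputable def matD (M : ℕ) : Matrix (Fin M) (Fin M) ℝ := fun i j =>
  if i = j then -2
  else if i.1 + 1 = j.1 ∨ j.1 + 1 = i.1 then 1
  else if (i.1 = 0 ∧ j.1 = M - 1) ∨ (j.1 = 0 ∧ i.1 = M - 1) then 1
  else 0

open Kronecker in
/-- The discrete Laplacian `Δ_h = h⁻²(I ⊗ D + D ⊗ I)`. -/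
noncomputable def lapMat (M : ℕ) (h : ℝ) : Matrix (Fin M × Fin M) (Fin M × Fin M) ℝ :=
  (h ^ 2)⁻¹ • ((1 : Matrix (Fin M) (Fin M) ℝ) ⊗ₖ matD M + matD M ⊗ₖ (1 : Matrix (Fin M) (Fin M) ℝ))

/-- The nonlinear term `f(W, U)`. -/
noncomputable def fnl {M : ℕ} (W U : Fin M × Fin M → ℝ) : Fin M × Fin M → ℝ := fun i =>
  1 / 3 * U i ^ 3 + 1 / 2 * W i ^ 2 * U i + 1 / 6 * W i ^ 3 - 1 / 2 * (U i + W i)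

/-- `(U^n)` solves the SFTR-1/2 Crank–Nicolson scheme. -/
def solvesScheme (α ε τ h : ℝ) (M : ℕ) (U : ℕ → (Fin M × Fin M → ℝ)) : Prop :=
  ∀ n : ℕ, 1 ≤ n →
    (τ ^ (-α)) • ∑ m ∈ Finset.range (n + 1), sftrW α m • (U (n - m) - U 0) =
      ε ^ 2 • (lapMat M h).mulVec ((1 / 2 : ℝ) • (U n + U (n - 1))) - fnl (U (n - 1)) (U n)

/-- The discrete L2 inner product (u,v) = h^2 * sum_i u_i v_i. -/
noncomputable def ipd {M : ℕ} (h : ℝ) (u v : Fin M × Fin M → ℝ) : ℝ :=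
  h ^ 2 * ∑ i, u i * v i

/-- The half-step variational derivative V^{s-1/2}. -/
noncomputable def Vhalf (ε h : ℝ) (M : ℕ) (U : ℕ → (Fin M × Fin M → ℝ)) (s : ℕ) :
    Fin M × Fin M → ℝ :=
  ε ^ 2 • (lapMat M h).mulVec ((1 / 2 : ℝ) • (U s + U (s - 1))) - fnl (U (s - 1)) (U s)

/-- The discrete energy E_h^n. -/
noncomputable def discE (ε h : ℝ) (M : ℕ) (U : ℕ → (Fin M × Fin M → ℝ)) (n : ℕ) : ℝ :=
  ε ^ 2 / 2 * ipd h (-(lapMat M h).mulVec (U n)) (U n) +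
    1 / 4 * ipd h (fun i => (U n i) ^ 2 - 1) (fun i => (U n i) ^ 2 - 1)

/-- The discrete compatible energy. -/
noncomputable def compE (α ε τ h : ℝ) (M : ℕ) (U : ℕ → (Fin M × Fin M → ℝ)) (n : ℕ) : ℝ :=
  if n = 0 then discE ε h M U 0
  else discE ε h M U n +
    τ ^ α / 2 * ∑ s ∈ Finset.Icc 1 n, varTheta α (n - s) * ipd h (Vhalf ε h M U s) (Vhalf ε h M U s)

/-!
The generating functions `W = Σ ω_m z^m` and `Θ = Σ θ_m z^m` solve first-order linear ODEs (the
recurrences say `Q W' = -2α² W` and `Q Θ' = ((1-α) z - (1-α)(2α+1)) Θ` with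
`Q = (α+1) - 2z + (1-α) z²`), and `1 - z` solves the resulting ODE for the product, so
`W Θ = 1 - z`. Convolving the scheme `Σ ω_m (U^{n-m} - U^0) = τ^α V^{n-1/2}` with `θ` therefore
gives `U^n - U^{n-1} = τ^α Σ_{s=1}^n θ_{n-s} V^{s-1/2}`. Pairing this with `V^{n-1/2}` in the
energy inequality `E_h^n - E_h^{n-1} ≤ -(V^{n-1/2}, U^n - U^{n-1})` of the Crank–Nicolson step and
using `ϑ_{n-1} = Σ_{s=1}^n θ_{n-s}`, the left side of the decay law is at most
`(τ^α/2) Σ_{s=1}^n θ_{n-s} ‖V^{s-1/2} - V^{n-1/2}‖²`, which is `≤ 0` because `θ_m ≤ 0` for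
`m ≥ 1`. Monotonicity then follows from `ϑ_m ≥ 0`.
-/

open PowerSeries Finset
open scoped Matrix Kronecker

namespace PowerSeries

variable {K : Type*} [Field K] [CharZero K]

theorem eq_of_mul_derivative_eq {Q A f g : K⟦X⟧} (hQ : constantCoeff Q ≠ 0)
    (hf : Q * d⁄dX K f = A * f) (hg : Q * d⁄dX K g = A * g)
    (h0 : constantCoeff f = constantCoeff g) : f = g := by
  set e := f - g
  have he : Q * d⁄dX K e = A * e := by simp only [e, map_sub, mul_sub, hf, hg]
  suffices ∀ n, ∀ k ≤ n, coeff k e = 0 from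
    sub_eq_zero.mp <| ext fun n => (this n n le_rfl).trans (map_zero _).symm
  intro n
  induction n with
  | zero => simp [e, h0]
  | succ n ih =>
    have hA : coeff n (A * e) = 0 := by
      rw [coeff_mul]
      refine sum_eq_zero fun p hp => ?_
      rw [ih p.2 (by have := mem_antidiagonal.1 hp; omega), mul_zero]
    have hQe : coeff n (Q * d⁄dX K e) = constantCoeff Q * (coeff (n + 1) e * (n + 1)) := by
      rw [coeff_mul, sum_eq_single_of_mem (0, n) (mem_antidiagonal.2 (zero_add n)),
        coeff_zero_eq_constantCoeff, coeff_derivative]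
      intro p hp hne
      have : p.2 < n := by
        have := mem_antidiagonal.1 hp
        obtain ⟨i, j⟩ := p
        simp only [ne_eq, Prod.mk.injEq] at this hne ⊢
        omega
      rw [coeff_derivative, ih (p.2 + 1) this, zero_mul, mul_zero]
    rw [he, hA, eq_comm, mul_eq_zero, mul_eq_zero] at hQe
    intro k hk
    rcases Nat.of_le_succ hk with hk | rfl
    · exact ih k hk
    · exact (hQe.resolve_left hQ).resolve_right (Nat.cast_add_one_ne_zero n)

theorem sub_eq_sum_of_mul_eq_one_sub_X {R A : Type*} [CommRing R] [CommRing A]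
    [Algebra R A] {ω θ : ℕ → R} (hωθ : PowerSeries.mk ω * PowerSeries.mk θ = 1 - X)
    {g b : ℕ → A} (hg : ∀ n, ∑ m ∈ range (n + 1), ω m • g (n - m) = b n) (n : ℕ) :
    g (n + 1) - g n = ∑ m ∈ range (n + 2), θ m • b (n + 1 - m) := by
  set φ := map (algebraMap R A)
  have coeff_φ_mul (c : ℕ → R) (f : A⟦X⟧) (k : ℕ) :
      coeff k (φ (PowerSeries.mk c) * f) = ∑ m ∈ range (k + 1), c m • coeff (k - m) f := by
    rw [coeff_mul, Finset.Nat.sum_antidiagonal_eq_sum_range_succ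
      (fun i j => coeff i (φ (PowerSeries.mk c)) * coeff j f)]
    simp [φ, Algebra.smul_def]
  have hW : φ (PowerSeries.mk ω) * PowerSeries.mk g = PowerSeries.mk b := by
    ext k
    rw [coeff_φ_mul, coeff_mk, ← hg]
    simp
  have hΘ : φ (PowerSeries.mk θ) * PowerSeries.mk b = (1 - X) * PowerSeries.mk g := by
    rw [← hW, ← mul_assoc, ← map_mul, mul_comm (PowerSeries.mk θ), hωθ, map_sub, map_one, map_X]
  have := congrArg (coeff (n + 1)) hΘ
  rw [coeff_φ_mul, sub_mul, one_mul, map_sub, coeff_succ_X_mul] at this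
  simpa using this.symm

end PowerSeries

theorem Finset.sum_Icc_one_eq_sum_range_reflect {N : Type*} [AddCommMonoid N] (f : ℕ → N)
    (n : ℕ) : ∑ s ∈ Icc 1 (n + 1), f s = ∑ m ∈ range (n + 1), f (n + 1 - m) :=
  sum_nbij' (fun s => n + 1 - s) (fun m => n + 1 - m)
    (fun s hs => by simp only [mem_Icc, mem_range] at hs ⊢; omega)
    (fun m hm => by simp only [mem_Icc, mem_range] at hm ⊢; omega)
    (fun s hs => by simp only [mem_Icc] at hs; omega)
    (fun m hm => by simp only [mem_range] at hm; omega)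
    (fun s hs => by congr 1; simp only [mem_Icc] at hs; omega)

theorem Matrix.IsSymm.kronecker {n R : Type*} [Mul R] {A B : Matrix n n R} (hA : A.IsSymm)
    (hB : B.IsSymm) : (A ⊗ₖ B).IsSymm := by
  rw [Matrix.IsSymm, ← Matrix.kroneckerMap_transpose, hA.eq, hB.eq]

theorem Matrix.IsSymm.mulVec_dotProduct {n R : Type*} [Fintype n] [CommSemiring R]
    {A : Matrix n n R} (hA : A.IsSymm) (u v : n → R) : A *ᵥ u ⬝ᵥ v = u ⬝ᵥ A *ᵥ v := by
  rw [Matrix.dotProduct_mulVec, ← Matrix.mulVec_transpose, hA.eq]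

section Sequences

variable {α : ℝ}

noncomputable def sftrQ (α : ℝ) : ℝ⟦X⟧ := C (α + 1) - C 2 * X + C (1 - α) * X ^ 2

theorem coeff_sftrQ_mul (f : ℝ⟦X⟧) (n : ℕ) :
    coeff (n + 2) (sftrQ α * f) =
      (α + 1) * coeff (n + 2) f - 2 * coeff (n + 1) f + (1 - α) * coeff n f := by
  simp [sftrQ, sub_mul, add_mul, mul_assoc, pow_two, coeff_succ_X_mul]

theorem coeff_one_sftrQ_mul (f : ℝ⟦X⟧) :
    coeff 1 (sftrQ α * f) = (α + 1) * coeff 1 f - 2 * coeff 0 f := by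
  simp [sftrQ, sub_mul, add_mul, mul_assoc, pow_two, coeff_succ_X_mul]

theorem coeff_zero_sftrQ_mul (f : ℝ⟦X⟧) :
    coeff 0 (sftrQ α * f) = (α + 1) * coeff 0 f := by
  simp [sftrQ, sub_mul, add_mul, mul_assoc, pow_two]

theorem sftrW_add_two (hα : 0 < α) (k : ℕ) :
    (α + 1) * (k + 2) * sftrW α (k + 2) =
      (2 * (k + 1) - 2 * α ^ 2) * sftrW α (k + 1) + (α - 1) * k * sftrW α k := by
  rw [sftrW.eq_3]
  field_simp
  ring

theorem sftrW_one (hα : 0 < α) : (α + 1) * sftrW α 1 = -(2 * α ^ 2) * sftrW α 0 := by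
  rw [sftrW.eq_1, sftrW.eq_2, Real.rpow_add (by positivity), Real.rpow_one]
  field_simp

theorem seqTheta_add_two (hα : 0 < α) (k : ℕ) :
    (α + 1) * (k + 2) * seqTheta α (k + 2) =
      (2 * (k + 1) - (1 - α) * (2 * α + 1)) * seqTheta α (k + 1) +
        (1 - α) * (1 - k) * seqTheta α k := by
  rw [seqTheta.eq_3]
  field_simp
  ring

theorem seqTheta_one (hα : 0 < α) :
    (α + 1) * seqTheta α 1 = -((1 - α) * (2 * α + 1)) * seqTheta α 0 := by
  rw [seqTheta.eq_2]
  field_simp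
  ring

theorem seqTheta_zero_pos (hα : 0 < α) : 0 < seqTheta α 0 := by
  rw [seqTheta.eq_1]
  positivity

theorem sftrW_zero_mul_seqTheta_zero (hα : 0 < α) : sftrW α 0 * seqTheta α 0 = 1 := by
  rw [sftrW.eq_1, seqTheta.eq_1, ← Real.mul_rpow (by positivity) (by positivity)]
  rw [show 2 * α / (α + 1) * ((α + 1) / (2 * α)) = 1 by field_simp, Real.one_rpow]

theorem sftrQ_mul_derivative_sftrW (hα : 0 < α) :
    sftrQ α * d⁄dX ℝ (PowerSeries.mk (sftrW α)) = C (-(2 * α ^ 2)) * PowerSeries.mk (sftrW α) := by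
  ext (_ | _ | n) : 1
  · simp only [coeff_zero_sftrQ_mul, coeff_derivative, coeff_mk, coeff_C_mul]
    linear_combination sftrW_one hα
  · simp only [zero_add, coeff_one_sftrQ_mul, coeff_derivative, coeff_mk, coeff_C_mul]
    linear_combination sftrW_add_two hα 0
  · simp only [coeff_sftrQ_mul, coeff_derivative, coeff_mk, coeff_C_mul]
    linear_combination (norm := (push_cast; ring)) sftrW_add_two hα (n + 1)

theorem sftrQ_mul_derivative_seqTheta (hα : 0 < α) :
    sftrQ α * d⁄dX ℝ (PowerSeries.mk (seqTheta α)) =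
      (C (1 - α) * X - C ((1 - α) * (2 * α + 1))) * PowerSeries.mk (seqTheta α) := by
  ext (_ | _ | n) : 1
  · simp only [coeff_zero_sftrQ_mul, coeff_derivative, coeff_mk, sub_mul, mul_assoc, map_sub,
      coeff_C_mul, coeff_zero_X_mul]
    linear_combination seqTheta_one hα
  · simp only [zero_add, coeff_one_sftrQ_mul, coeff_derivative, coeff_mk, sub_mul, mul_assoc,
      map_sub, coeff_C_mul, coeff_succ_X_mul]
    linear_combination seqTheta_add_two hα 0
  · simp only [coeff_sftrQ_mul, coeff_derivative, coeff_mk, sub_mul, mul_assoc, map_sub,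
      coeff_C_mul, coeff_succ_X_mul]
    linear_combination (norm := (push_cast; ring)) seqTheta_add_two hα (n + 1)

theorem mk_sftrW_mul_mk_seqTheta (hα : 0 < α) :
    PowerSeries.mk (sftrW α) * PowerSeries.mk (seqTheta α) = 1 - X := by
  refine eq_of_mul_derivative_eq (Q := sftrQ α) (A := C (1 - α) * X - C (α + 1)) ?_ ?_ ?_ ?_
  · simp [sftrQ]
    linarith
  · have hC : C (-(2 * α ^ 2)) - C ((1 - α) * (2 * α + 1)) = -C (α + 1) := by
      rw [← map_sub, ← map_neg]
      congr 1
      ring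
    rw [Derivation.leibniz, smul_eq_mul, smul_eq_mul]
    linear_combination PowerSeries.mk (seqTheta α) * sftrQ_mul_derivative_sftrW hα +
      PowerSeries.mk (sftrW α) * sftrQ_mul_derivative_seqTheta hα +
      PowerSeries.mk (sftrW α) * PowerSeries.mk (seqTheta α) * hC
  · have hC : C (2 : ℝ) = C (1 - α) + C (α + 1) := by
      rw [← map_add]
      congr 1
      ring
    simp only [sftrQ, map_sub, Derivation.map_one_eq_zero, derivative_X, hC]
    ring
  · simp [sftrW_zero_mul_seqTheta_zero hα]

end Sequences

section Signs

variable {α : ℝ}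

theorem mul_seqTheta_add_two_le (hα : α ∈ Set.Ioo 0 1) (m : ℕ) :
    (m + 2) * seqTheta α (m + 2) ≤ m * seqTheta α (m + 1) ∧ m * seqTheta α (m + 1) ≤ 0 := by
  obtain ⟨h0, h1⟩ := hα
  induction m with
  | zero =>
    have h2 : (α + 1) ^ 2 * 2 * seqTheta α 2 = -(4 * α ^ 3 * (1 - α)) * seqTheta α 0 := by
      linear_combination (α + 1) * seqTheta_add_two h0 0 +
        (2 - (1 - α) * (2 * α + 1)) * seqTheta_one h0
    have h2' : seqTheta α 2 ≤ 0 := by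
      refine nonpos_of_mul_nonpos_right (h2 ▸ ?_) (by positivity : 0 < (α + 1) ^ 2 * 2)
      have := seqTheta_zero_pos h0
      have : 0 < 1 - α := by linarith
      have : 0 ≤ 4 * α ^ 3 * (1 - α) * seqTheta α 0 := by positivity
      linarith
    norm_num
    linarith
  | succ m ih =>
    have hθ : seqTheta α (m + 2) ≤ 0 :=
      nonpos_of_mul_nonpos_right (ih.1.trans ih.2) (by positivity)
    have hrec := seqTheta_add_two h0 (m + 1)
    rw [show m + 1 + 1 = m + 2 from rfl, show m + 1 + 2 = m + 3 from rfl] at *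
    push_cast at hrec ⊢
    refine ⟨le_of_mul_le_mul_left ?_ (by linarith : 0 < α + 1),
      mul_nonpos_of_nonneg_of_nonpos (by positivity) hθ⟩
    have : 0 ≤ 1 - α := by linarith
    linear_combination hrec + (1 - α) * ih.1 + 2 * α ^ 2 * hθ

theorem seqTheta_nonpos (hα : α ∈ Set.Ioo 0 1) : ∀ {m : ℕ}, 1 ≤ m → seqTheta α m ≤ 0
  | 1, _ => by
    refine nonpos_of_mul_nonpos_right ?_ (by linarith [hα.1] : 0 < α + 1)
    have := seqTheta_zero_pos hα.1
    have : 0 < 1 - α := by linarith [hα.2]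
    have : 0 ≤ (1 - α) * (2 * α + 1) * seqTheta α 0 := by have := hα.1; positivity
    linarith [seqTheta_one hα.1]
  | m + 2, _ => nonpos_of_mul_nonpos_right ((mul_seqTheta_add_two_le hα m).1.trans
      (mul_seqTheta_add_two_le hα m).2) (by positivity)

theorem varTheta_zero : varTheta α 0 = seqTheta α 0 := by
  simp [varTheta]

theorem varTheta_succ (m : ℕ) : varTheta α (m + 1) = varTheta α m + seqTheta α (m + 1) :=
  sum_range_succ _ _

theorem varTheta_add_two (hα : 0 < α) (m : ℕ) :
    (1 + α) * (m + 2) * varTheta α (m + 2) =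
      (2 * (m + 1) + 2 * α ^ 2) * varTheta α (m + 1) - (1 - α) * m * varTheta α m := by
  induction m with
  | zero =>
    simp only [varTheta_succ, varTheta_zero]
    linear_combination (norm := (push_cast; ring)) seqTheta_add_two hα 0 + seqTheta_one hα
  | succ k ih =>
    rw [varTheta_succ (k + 2), varTheta_succ (k + 1), varTheta_succ k] at *
    linear_combination (norm := (push_cast; ring)) ih + seqTheta_add_two hα (k + 1)

theorem varTheta_succ_nonneg_and_mul_le (hα : α ∈ Set.Ioo 0 1) (k : ℕ) :
    0 ≤ varTheta α (k + 1) ∧ (k + 1 + α) * varTheta α (k + 1) ≤ (k + 2) * varTheta α (k + 2) := by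
  obtain ⟨h0, h1⟩ := hα
  induction k with
  | zero =>
    have h1' : (α + 1) * varTheta α 1 = 2 * α ^ 2 * seqTheta α 0 := by
      rw [varTheta_succ, varTheta_zero]
      linear_combination seqTheta_one h0
    have hv1 : 0 ≤ varTheta α 1 := by
      refine nonneg_of_mul_nonneg_right (h1' ▸ ?_) (by linarith : 0 < α + 1)
      have := seqTheta_zero_pos h0
      positivity
    refine ⟨hv1, le_of_mul_le_mul_left ?_ (by linarith : 0 < 1 + α)⟩
    push_cast
    linear_combination (1 - α) ^ 2 * hv1 - varTheta_add_two h0 0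
  | succ k ih =>
    have hrec := varTheta_add_two h0 (k + 1)
    rw [show k + 1 + 1 = k + 2 from rfl, show k + 1 + 2 = k + 3 from rfl] at *
    push_cast at hrec ⊢
    have hv2 : 0 ≤ varTheta α (k + 2) :=
      nonneg_of_mul_nonneg_right ((mul_nonneg (by positivity) ih.1).trans ih.2)
        (by positivity : (0 : ℝ) < k + 2)
    refine ⟨hv2, le_of_mul_le_mul_left ?_ (by positivity : 0 < (1 + α) * (k + 1 + α))⟩
    have : 0 ≤ 1 - α := by linarith
    linear_combination (1 - α) * (k + 1) * ih.2 + α * (1 - α) ^ 2 * hv2 - (k + 1 + α) * hrec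

theorem varTheta_nonneg (hα : α ∈ Set.Ioo 0 1) : ∀ m : ℕ, 0 ≤ varTheta α m
  | 0 => varTheta_zero (α := α) ▸ (seqTheta_zero_pos hα.1).le
  | m + 1 => (varTheta_succ_nonneg_and_mul_le hα m).1

theorem varTheta_eq_sum_Icc (n : ℕ) :
    varTheta α n = ∑ s ∈ Icc 1 (n + 1), seqTheta α (n + 1 - s) := by
  rw [sum_Icc_one_eq_sum_range_reflect, varTheta]
  exact sum_congr rfl fun m hm => by congr 1; simp only [mem_range] at hm; omega

end Signs

section Scheme

variable {α ε τ h : ℝ} {M : ℕ}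

theorem matD_isSymm : (matD M).IsSymm :=
  Matrix.IsSymm.ext fun _ _ =>
    if_congr eq_comm rfl (if_congr or_comm rfl (if_congr or_comm rfl rfl))

theorem lapMat_isSymm : (lapMat M h).IsSymm :=
  ((Matrix.isSymm_one.kronecker matD_isSymm).add (matD_isSymm.kronecker Matrix.isSymm_one)).smul _

theorem fnl_mul_sub (a b : Fin M × Fin M → ℝ) (i : Fin M × Fin M) :
    fnl b a i * (a i - b i) =
      ((a i ^ 2 - 1) ^ 2 - (b i ^ 2 - 1) ^ 2) / 4 + (a i - b i) ^ 4 / 12 := by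
  simp only [fnl]
  ring

theorem ipd_eq_dotProduct (u v : Fin M × Fin M → ℝ) : ipd h u v = h ^ 2 * (u ⬝ᵥ v) := rfl

theorem discE_succ_sub_le (U : ℕ → Fin M × Fin M → ℝ) (n : ℕ) :
    discE ε h M U (n + 1) - discE ε h M U n ≤
      -ipd h (Vhalf ε h M U (n + 1)) (U (n + 1) - U n) := by
  simp only [discE, Vhalf, ipd_eq_dotProduct, Nat.add_sub_cancel]
  set a := U (n + 1)
  set b := U n
  set L := lapMat M h
  have hV : (ε ^ 2 • L *ᵥ (1 / 2 : ℝ) • (a + b) - fnl b a) ⬝ᵥ (a - b) =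
      ε ^ 2 / 2 * (L *ᵥ a ⬝ᵥ a - L *ᵥ b ⬝ᵥ b) - fnl b a ⬝ᵥ (a - b) := by
    have hsym : L *ᵥ b ⬝ᵥ a = L *ᵥ a ⬝ᵥ b := by
      rw [lapMat_isSymm.mulVec_dotProduct, dotProduct_comm]
    simp only [sub_dotProduct, smul_dotProduct, Matrix.mulVec_smul, Matrix.mulVec_add,
      add_dotProduct, dotProduct_sub, hsym, smul_eq_mul]
    ring
  have hf : fnl b a ⬝ᵥ (a - b) =
      ((fun i => a i ^ 2 - 1) ⬝ᵥ (fun i => a i ^ 2 - 1) -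
        (fun i => b i ^ 2 - 1) ⬝ᵥ (fun i => b i ^ 2 - 1)) / 4 + (∑ i, (a i - b i) ^ 4) / 12 := by
    simp only [dotProduct, Pi.sub_apply, fnl_mul_sub, sum_add_distrib, ← sum_sub_distrib,
      ← sum_div, sq]
  have h4 : 0 ≤ h ^ 2 * ∑ i, (a i - b i) ^ 4 := by positivity
  rw [hV, hf]
  simp only [neg_dotProduct]
  linear_combination h4 / 12

theorem ipd_self_nonneg (u : Fin M × Fin M → ℝ) : 0 ≤ ipd h u u := by
  rw [ipd_eq_dotProduct]
  exact mul_nonneg (sq_nonneg h) (dotProduct_self_star_nonneg u)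

theorem ipd_sub_sub (u v : Fin M × Fin M → ℝ) :
    ipd h (u - v) (u - v) = ipd h u u - 2 * ipd h v u + ipd h v v := by
  simp only [ipd_eq_dotProduct, sub_dotProduct, dotProduct_sub, dotProduct_comm u v]
  ring

theorem ipd_smul_sum_smul {ι : Type*} (u : Fin M × Fin M → ℝ) (r : ℝ) (S : Finset ι)
    (c : ι → ℝ) (v : ι → Fin M × Fin M → ℝ) :
    ipd h u (r • ∑ s ∈ S, c s • v s) = r * ∑ s ∈ S, c s * ipd h u (v s) := by
  simp only [ipd_eq_dotProduct, dotProduct_smul, dotProduct_sum, smul_eq_mul, mul_sum]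
  exact sum_congr rfl fun _ _ => by ring

theorem sum_mul_ipd_sub_sub {ι : Type*} (S : Finset ι) (c : ι → ℝ)
    (v : ι → Fin M × Fin M → ℝ) (w : Fin M × Fin M → ℝ) :
    ∑ s ∈ S, c s * ipd h (v s - w) (v s - w) =
      ∑ s ∈ S, c s * ipd h (v s) (v s) - 2 * ∑ s ∈ S, c s * ipd h w (v s) +
        (∑ s ∈ S, c s) * ipd h w w := by
  simp only [ipd_sub_sub, mul_add, mul_sub, sum_add_distrib, sum_sub_distrib, ← sum_mul,
    mul_left_comm _ (2 : ℝ), ← mul_sum]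

theorem sum_seqTheta_mul_ipd_sub_nonpos (hα : α ∈ Set.Ioo 0 1) (v : ℕ → Fin M × Fin M → ℝ)
    (m : ℕ) : ∑ s ∈ Icc 1 (m + 1),
      seqTheta α (m + 1 - s) * ipd h (v s - v (m + 1)) (v s - v (m + 1)) ≤ 0 := by
  refine sum_nonpos fun s hs => ?_
  rcases eq_or_ne s (m + 1) with rfl | hs'
  · simp [ipd]
  · exact mul_nonpos_of_nonpos_of_nonneg
      (seqTheta_nonpos hα (by simp only [mem_Icc] at hs; omega)) (ipd_self_nonneg _)

variable {U : ℕ → Fin M × Fin M → ℝ}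

theorem solvesScheme.succ_sub_eq (hα : 0 < α) (hτ : 0 < τ) (hU : solvesScheme α ε τ h M U)
    (n : ℕ) : U (n + 1) - U n =
      τ ^ α • ∑ s ∈ Icc 1 (n + 1), seqTheta α (n + 1 - s) • Vhalf ε h M U s := by
  set b : ℕ → Fin M × Fin M → ℝ := fun k => ∑ m ∈ range (k + 1), sftrW α m • (U (k - m) - U 0)
  have hb0 : b 0 = 0 := by simp [b]
  have hb (k : ℕ) (hk : 1 ≤ k) : b k = τ ^ α • Vhalf ε h M U k := by
    rw [Vhalf, ← hU k hk, smul_smul, ← Real.rpow_add hτ, add_neg_cancel, Real.rpow_zero, one_smul]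
  have := sub_eq_sum_of_mul_eq_one_sub_X (mk_sftrW_mul_mk_seqTheta hα)
    (g := fun k => U k - U 0) (b := b) (fun _ => rfl) n
  rw [sub_sub_sub_cancel_right, sum_range_succ, Nat.sub_self, hb0, smul_zero, add_zero] at this
  rw [this, sum_Icc_one_eq_sum_range_reflect, smul_sum]
  refine sum_congr rfl fun m hm => ?_
  simp only [mem_range] at hm
  rw [Nat.sub_sub_self (by omega), hb _ (by omega), smul_comm]

theorem compE_eq_discE_add (n : ℕ) : compE α ε τ h M U n = discE ε h M U n +
    τ ^ α / 2 * ∑ s ∈ Icc 1 n, varTheta α (n - s) * ipd h (Vhalf ε h M U s) (Vhalf ε h M U s) := by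
  rw [compE]
  split_ifs with hn
  · simp [hn]
  · rfl

theorem compE_succ_sub (n : ℕ) : compE α ε τ h M U (n + 1) - compE α ε τ h M U n =
    discE ε h M U (n + 1) - discE ε h M U n + τ ^ α / 2 *
      ∑ s ∈ Icc 1 (n + 1), seqTheta α (n + 1 - s) * ipd h (Vhalf ε h M U s) (Vhalf ε h M U s) := by
  have hsplit : ∑ s ∈ Icc 1 n, varTheta α (n + 1 - s) *
        ipd h (Vhalf ε h M U s) (Vhalf ε h M U s) =
      ∑ s ∈ Icc 1 n, varTheta α (n - s) * ipd h (Vhalf ε h M U s) (Vhalf ε h M U s) +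
        ∑ s ∈ Icc 1 n, seqTheta α (n + 1 - s) * ipd h (Vhalf ε h M U s) (Vhalf ε h M U s) := by
    rw [← sum_add_distrib]
    refine sum_congr rfl fun s hs => ?_
    simp only [mem_Icc] at hs
    rw [show n + 1 - s = n - s + 1 by omega, varTheta_succ]
    ring
  rw [compE_eq_discE_add, compE_eq_discE_add, sum_Icc_succ_top (by omega),
    sum_Icc_succ_top (by omega), hsplit, Nat.sub_self, varTheta_zero]
  ring

end Scheme

theorem discrete_energy_decay_general (α ε τ h : ℝ) (M : ℕ)
    (hα : α ∈ Set.Ioo (0 : ℝ) 1) (hτ : 0 < τ)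
    (U : ℕ → (Fin M × Fin M → ℝ)) (hU : solvesScheme α ε τ h M U) :
    ∀ n : ℕ, 1 ≤ n →
      compE α ε τ h M U n - compE α ε τ h M U (n - 1) +
          τ ^ α / 2 * varTheta α (n - 1) * ipd h (Vhalf ε h M U n) (Vhalf ε h M U n) ≤ 0 ∧
      compE α ε τ h M U n ≤ compE α ε τ h M U (n - 1) := by
  intro n hn
  obtain ⟨m, rfl⟩ := Nat.exists_eq_add_of_le' hn
  rw [Nat.add_sub_cancel]
  have hE := discE_succ_sub_le (ε := ε) (h := h) U m
  set V := Vhalf ε h M U with hV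
  have hpair : ipd h (V (m + 1)) (U (m + 1) - U m) =
      τ ^ α * ∑ s ∈ Icc 1 (m + 1), seqTheta α (m + 1 - s) * ipd h (V (m + 1)) (V s) := by
    rw [hU.succ_sub_eq hα.1 hτ, ipd_smul_sum_smul]
  have hquad := sum_seqTheta_mul_ipd_sub_nonpos (h := h) hα V m
  rw [sum_mul_ipd_sub_sub] at hquad
  have hdecay : compE α ε τ h M U (m + 1) - compE α ε τ h M U m +
      τ ^ α / 2 * varTheta α m * ipd h (V (m + 1)) (V (m + 1)) ≤ 0 := by
    rw [compE_succ_sub, varTheta_eq_sum_Icc, ← hV]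
    linear_combination hE - hpair + τ ^ α / 2 * hquad
  have hϑ : 0 ≤ τ ^ α / 2 * varTheta α m * ipd h (V (m + 1)) (V (m + 1)) :=
    mul_nonneg (mul_nonneg (by positivity) (varTheta_nonneg hα m)) (ipd_self_nonneg _)
  exact ⟨hdecay, by linarith⟩

theorem discrete_energy_decay (α ε τ h : ℝ) (M : ℕ)
    (hα : α ∈ Set.Ioo (0 : ℝ) 1) (hε : 0 < ε) (hτ : 0 < τ) (hh : 0 < h) (hM : 2 ≤ M)
    (U : ℕ → (Fin M × Fin M → ℝ)) (hU : solvesScheme α ε τ h M U) :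
    ∀ n : ℕ, 1 ≤ n →
      compE α ε τ h M U n - compE α ε τ h M U (n - 1) +
          τ ^ α / 2 * varTheta α (n - 1) * ipd h (Vhalf ε h M U n) (Vhalf ε h M U n) ≤ 0 ∧
      compE α ε τ h M U n ≤ compE α ε τ h M U (n - 1) :=
  discrete_energy_decay_general α ε τ h M hα hτ U hU
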